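/- Let Y be a simply-connected hyperbolic surface with geodesic boundary and f : Y → Y' an L-Lipschitz map to another such surface that restricts to an affine map of slope L on each boundary geodesic. If g1, g2 ⊂ ∂Y are asymptotic geodesics sharing an ideal endpoint ξ, and H is a horocycle based at ξ meeting g1 at p1 and g2 at p2, then f(p1) and f(p2) lie on a common horocycle based at the common ideal endpoint of f(g1) and f(g2). -/

import Mathlib

/-- Hyperbolic distance between two points of the upper half-plane (model: subsets of
`ℂ` with positive imaginary part). -/
noncomputable def hdist (z w : ℂ) : ℝ :=
  2 * Real.arsinh (‖z - w‖ / (2 * Real.sqrt (z.im * w.im)))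

/-- The Busemann function of the upper half-plane based at the ideal point `ξ ∈ ℝ`
(normalized up to an additive constant); horocycles based at `ξ` are its level sets. -/
noncomputable def busemann (ξ : ℝ) (z : ℂ) : ℝ :=
  Real.log ((‖z - (ξ : ℂ)‖) ^ 2 / z.im)

lemma sinh_half_log (p q : ℝ) (hp : 0 < p) (hq : 0 < q) :
    Real.sinh ((Real.log p - Real.log q)/2) = (p - q) / (2 * Real.sqrt (p*q)) := by
  have hsp : Real.sqrt p = Real.exp (Real.log p / 2) := by
    rw [Real.sqrt_eq_rpow, Real.rpow_def_of_pos hp]; ring_nf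
  have hsq : Real.sqrt q = Real.exp (Real.log q / 2) := by
    rw [Real.sqrt_eq_rpow, Real.rpow_def_of_pos hq]; ring_nf
  have hsp0 : (0:ℝ) < Real.sqrt p := Real.sqrt_pos.mpr hp
  have hsq0 : (0:ℝ) < Real.sqrt q := Real.sqrt_pos.mpr hq
  have hpp : Real.sqrt p * Real.sqrt p = p := Real.mul_self_sqrt hp.le
  have hqq : Real.sqrt q * Real.sqrt q = q := Real.mul_self_sqrt hq.le
  rw [Real.sqrt_mul hp.le, Real.sinh_eq]
  have h1 : Real.exp ((Real.log p - Real.log q)/2) = Real.sqrt p / Real.sqrt q := by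
    rw [hsp, hsq, ← Real.exp_sub]; ring_nf
  have h2 : Real.exp (-((Real.log p - Real.log q)/2)) = Real.sqrt q / Real.sqrt p := by
    rw [hsp, hsq, ← Real.exp_sub]; ring_nf
  rw [h1, h2]
  rw [div_eq_div_iff (by norm_num) (by positivity)]
  field_simp
  nlinarith [hpp, hqq, mul_pos hsp0 hsq0]

lemma log_sub_le (p q s : ℝ) (hp : 0 < p) (hq : 0 < q) (hs : 0 ≤ s)
    (hle : |p - q| ≤ 2*s*Real.sqrt (p*q)) :
    |Real.log p - Real.log q| ≤ 2 * Real.arsinh s := by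
  wlog hqp : q ≤ p generalizing p q
  · have := this q p hq hp (by rwa [abs_sub_comm, mul_comm q p]) (le_of_not_ge hqp)
    rwa [abs_sub_comm]
  have hS : 0 < Real.sqrt (p*q) := Real.sqrt_pos.mpr (by positivity)
  have hlogle : 0 ≤ Real.log p - Real.log q := by
    have := Real.log_le_log hq hqp
    linarith
  rw [abs_of_nonneg hlogle]
  have key : Real.log p - Real.log q = 2 * Real.arsinh ((p - q)/(2*Real.sqrt (p*q))) := by
    rw [← sinh_half_log p q hp hq, Real.arsinh_sinh]; ring
  rw [key]
  have : (p - q)/(2*Real.sqrt (p*q)) ≤ s := by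
    rw [div_le_iff₀ (by positivity)]
    calc p - q = |p - q| := (abs_of_nonneg (by linarith)).symm
    _ ≤ 2*s*Real.sqrt (p*q) := hle
    _ = s * (2 * Real.sqrt (p*q)) := by ring
  have := Real.arsinh_le_arsinh.mpr this
  linarith

lemma busemann_lip (ξ : ℝ) (z w : ℂ) (hz : 0 < z.im) (hw : 0 < w.im) :
    |busemann ξ z - busemann ξ w| ≤ 3 * hdist z w := by
  set Az := ‖z - (ξ:ℂ)‖ with hAz
  set Aw := ‖w - (ξ:ℂ)‖ with hAw
  have hzim : z.im ≤ Az := by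
    calc z.im ≤ |(z - (ξ:ℂ)).im| := by simp [le_abs_self]
    _ ≤ Az := Complex.abs_im_le_norm _
  have hwim : w.im ≤ Aw := by
    calc w.im ≤ |(w - (ξ:ℂ)).im| := by simp [le_abs_self]
    _ ≤ Aw := Complex.abs_im_le_norm _
  have hAz0 : 0 < Az := lt_of_lt_of_le hz hzim
  have hAw0 : 0 < Aw := lt_of_lt_of_le hw hwim
  set s := ‖z - w‖ / (2 * Real.sqrt (z.im * w.im)) with hs
  have hS : 0 < Real.sqrt (z.im * w.im) := Real.sqrt_pos.mpr (by positivity)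
  have hs0 : 0 ≤ s := by positivity
  have habs : ‖z - w‖ = 2 * s * Real.sqrt (z.im * w.im) := by
    rw [hs]; field_simp
  -- bound on imaginary parts
  have him : |z.im - w.im| ≤ 2*s*Real.sqrt (z.im * w.im) := by
    rw [← habs]
    calc |z.im - w.im| = |(z - w).im| := by simp
    _ ≤ ‖z - w‖ := Complex.abs_im_le_norm _
  have h1 : |Real.log z.im - Real.log w.im| ≤ 2 * Real.arsinh s :=
    log_sub_le _ _ _ hz hw hs0 him
  -- bound on |z-ξ|
  have hA : |Az - Aw| ≤ 2*s*Real.sqrt (Az * Aw) := by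
    have e1 : |Az - Aw| ≤ ‖z - w‖ := by
      have := abs_norm_sub_norm_le (z - (ξ:ℂ)) (w - (ξ:ℂ))
      simpa [hAz, hAw] using this
    have e2 : Real.sqrt (z.im * w.im) ≤ Real.sqrt (Az * Aw) :=
      Real.sqrt_le_sqrt (by nlinarith)
    calc |Az - Aw| ≤ ‖z - w‖ := e1
    _ = 2*s*Real.sqrt (z.im * w.im) := habs
    _ ≤ 2*s*Real.sqrt (Az * Aw) := by nlinarith
  have h2 : |Real.log Az - Real.log Aw| ≤ 2 * Real.arsinh s :=
    log_sub_le _ _ _ hAz0 hAw0 hs0 hA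
  have hbz : busemann ξ z = 2 * Real.log Az - Real.log z.im := by
    rw [busemann, Real.log_div (by positivity) (ne_of_gt hz), Real.log_pow]
    push_cast; ring
  have hbw : busemann ξ w = 2 * Real.log Aw - Real.log w.im := by
    rw [busemann, Real.log_div (by positivity) (ne_of_gt hw), Real.log_pow]
    push_cast; ring
  rw [hbz, hbw, hdist]
  have : |2 * Real.log Az - Real.log z.im - (2 * Real.log Aw - Real.log w.im)|
      ≤ 2 * |Real.log Az - Real.log Aw| + |Real.log z.im - Real.log w.im| := by
    rw [show 2 * Real.log Az - Real.log z.im - (2 * Real.log Aw - Real.log w.im)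
      = 2 * (Real.log Az - Real.log Aw) - (Real.log z.im - Real.log w.im) by ring]
    calc _ ≤ |2 * (Real.log Az - Real.log Aw)| + |Real.log z.im - Real.log w.im| :=
      abs_sub _ _
    _ = 2 * |Real.log Az - Real.log Aw| + |Real.log z.im - Real.log w.im| := by
      rw [abs_mul]; norm_num
  linarith

lemma hdist_vertical (a t u : ℝ) (h0 : 0 < u) (hth : u ≤ t) :
    hdist ((a:ℂ) + t*Complex.I) ((a:ℂ) + u*Complex.I) = Real.log (t/u) := by
  have ht : 0 < t := lt_of_lt_of_le h0 hth
  have him1 : ((a:ℂ) + t*Complex.I).im = t := by simp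
  have him2 : ((a:ℂ) + u*Complex.I).im = u := by simp
  have habs : ‖(a:ℂ) + t*Complex.I - ((a:ℂ) + u*Complex.I)‖ = t - u := by
    rw [show (a:ℂ) + t*Complex.I - ((a:ℂ) + u*Complex.I) = ((t - u : ℝ))*Complex.I by
      push_cast; ring]
    rw [norm_mul, Complex.norm_I, Complex.norm_real, Real.norm_eq_abs, abs_of_nonneg (by linarith : (0:ℝ) ≤ t - u)]
    ring
  rw [hdist, him1, him2, habs, Real.log_div (ne_of_gt ht) (ne_of_gt h0),
    ← sinh_half_log t u ht h0, Real.arsinh_sinh]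
  ring

lemma hdist_horizontal (a b t : ℝ) (ht : 0 < t) :
    hdist ((a:ℂ)+t*Complex.I) ((b:ℂ)+t*Complex.I) = 2*Real.arsinh (|a-b|/(2*t)) := by
  have habs : ‖(a:ℂ) + t*Complex.I - ((b:ℂ) + t*Complex.I)‖ = |a - b| := by
    rw [show (a:ℂ) + t*Complex.I - ((b:ℂ) + t*Complex.I) = ((a - b : ℝ)) by push_cast; ring]
    rw [Complex.norm_real, Real.norm_eq_abs]
  rw [hdist, habs]
  simp [Real.sqrt_mul_self ht.le]

lemma circle_constraint (ξ η : ℝ) (z : ℂ)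
    (hcz : ‖z - (((ξ+η)/2:ℝ):ℂ)‖ = |ξ-η|/2) :
    (z.re - ξ)^2 + z.im^2 = (η - ξ)*(z.re - ξ) := by
  have h1 : ‖z - (((ξ+η)/2:ℝ):ℂ)‖^2 = (|ξ-η|/2)^2 := by rw [hcz]
  rw [Complex.sq_norm, Complex.normSq_apply] at h1
  simp only [Complex.sub_re, Complex.sub_im, Complex.ofReal_re, Complex.ofReal_im] at h1
  have h2 : (|ξ-η|/2)^2 = ((ξ-η)/2)^2 := by rw [div_pow, div_pow, sq_abs]
  rw [h2] at h1
  nlinarith [h1]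

lemma abs_sub_ofReal_sq (ξ : ℝ) (z : ℂ) :
    ‖z - (ξ:ℂ)‖^2 = (z.re - ξ)^2 + z.im^2 := by
  rw [Complex.sq_norm, Complex.normSq_apply]
  simp only [Complex.sub_re, Complex.sub_im, Complex.ofReal_re, Complex.ofReal_im]
  ring

lemma circle_hdist (ξ η : ℝ) (z w : ℂ) (hz : 0 < z.im) (hw : 0 < w.im)
    (hcz : ‖z - (((ξ+η)/2:ℝ):ℂ)‖ = |ξ-η|/2)
    (hcw : ‖w - (((ξ+η)/2:ℝ):ℂ)‖ = |ξ-η|/2) :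
    hdist z w = |busemann ξ z - busemann ξ w| := by
  have c1 := circle_constraint ξ η z hcz
  have c2 := circle_constraint ξ η w hcw
  set u1 := z.re - ξ with hu1
  set u2 := z.im with hu2
  set v1 := w.re - ξ with hv1
  set v2 := w.im with hv2
  set m := η - ξ with hm
  have hAz : ‖z - (ξ:ℂ)‖^2 = m*u1 := by
    rw [abs_sub_ofReal_sq, ← hu1, ← hu2]; exact c1
  have hAw : ‖w - (ξ:ℂ)‖^2 = m*v1 := by
    rw [abs_sub_ofReal_sq, ← hv1, ← hv2]; exact c2
  have hmu1 : 0 < m*u1 := by rw [← hAz, abs_sub_ofReal_sq]; positivity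
  have hmv1 : 0 < m*v1 := by rw [← hAw, abs_sub_ofReal_sq]; positivity
  -- Busemann difference as a log
  set T := (m*u1/u2)/(m*v1/v2) with hT
  have hT0 : 0 < T := by positivity
  have hβ : busemann ξ z - busemann ξ w = Real.log T := by
    have e1 : busemann ξ z = Real.log (m*u1/u2) := by rw [busemann, hAz, ← hu2]
    have e2 : busemann ξ w = Real.log (m*v1/v2) := by rw [busemann, hAw, ← hv2]
    rw [e1, e2, hT]
    exact (Real.log_div (by positivity) (by positivity)).symm
  -- cosh of the busemann difference
  have hcoshβ : Real.cosh (busemann ξ z - busemann ξ w) = (T + T⁻¹)/2 := by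
    rw [hβ, Real.cosh_eq, Real.exp_log hT0, Real.exp_neg, Real.exp_log hT0]
  -- cosh of hdist
  have habsq : ‖z - w‖^2 = (u1 - v1)^2 + (u2 - v2)^2 := by
    rw [Complex.sq_norm, Complex.normSq_apply]
    simp only [Complex.sub_re, Complex.sub_im]
    rw [hu1, hv1, hu2, hv2]; ring
  have hcoshd : Real.cosh (hdist z w) = 1 + ((u1-v1)^2 + (u2-v2)^2)/(2*u2*v2) := by
    rw [hdist, Real.cosh_two_mul, Real.cosh_sq, Real.sinh_arsinh, div_pow,
      mul_pow, Real.sq_sqrt (by positivity : (0:ℝ) ≤ z.im * w.im), ← habsq]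
    rw [← hu2, ← hv2]
    field_simp
    ring
  -- key polynomial identity
  have key : 2*u2*v2*((m*u1)*(m*v1)) + ((u1-v1)^2+(u2-v2)^2)*((m*u1)*(m*v1))
      = (m*u1)^2*v2^2 + (m*v1)^2*u2^2 := by
    linear_combination (m^2*(u1*v1 - v1^2))*c1 + (m^2*(u1*v1 - u1^2))*c2
  -- equality of cosh values
  have hcosheq : Real.cosh (hdist z w) = Real.cosh (busemann ξ z - busemann ξ w) := by
    rw [hcoshd, hcoshβ, hT]
    have hu20 : u2 ≠ 0 := ne_of_gt hz
    have hv20 : v2 ≠ 0 := ne_of_gt hw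
    have hmu10 : m*u1 ≠ 0 := ne_of_gt hmu1
    have hmv10 : m*v1 ≠ 0 := ne_of_gt hmv1
    have hm0 : m ≠ 0 := left_ne_zero_of_mul hmu10
    have hu10 : u1 ≠ 0 := right_ne_zero_of_mul hmu10
    have hv10 : v1 ≠ 0 := right_ne_zero_of_mul hmv10
    field_simp
    apply mul_left_cancel₀ (pow_ne_zero 2 hm0)
    linear_combination key
  -- conclude
  have hd0 : 0 ≤ hdist z w := by
    rw [hdist]
    have : 0 ≤ Real.arsinh (‖z - w‖ / (2 * Real.sqrt (z.im * w.im))) := by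
      rw [← Real.arsinh_zero]
      exact Real.arsinh_le_arsinh.mpr (by positivity)
    linarith
  rcases lt_trichotomy (hdist z w) |busemann ξ z - busemann ξ w| with hlt | heq | hgt
  · exfalso
    have : Real.cosh (hdist z w) < Real.cosh (busemann ξ z - busemann ξ w) := by
      rw [← Real.cosh_abs (busemann ξ z - busemann ξ w)]
      exact Real.cosh_lt_cosh.mpr (by rwa [abs_of_nonneg hd0, abs_abs])
    linarith [this, hcosheq.le]
  · exact heq
  · exfalso
    have : Real.cosh (busemann ξ z - busemann ξ w) < Real.cosh (hdist z w) := by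
      conv_lhs => rw [← Real.cosh_abs]
      exact Real.cosh_lt_cosh.mpr (by rwa [abs_of_nonneg hd0, abs_abs])
    linarith [this, hcosheq.ge]

/-- Let `Y` be a simply-connected hyperbolic surface with geodesic
boundary (realized as a subset of the upper half-plane) and `f : Y → Y'` an
`L`-Lipschitz map to another such surface that restricts to an affine map of slope `L`
on each boundary geodesic.  If `g1, g2 ⊂ ∂Y` are asymptotic geodesics sharing the
ideal endpoint `ξ = ∞` (vertical lines `Re = a` and `Re = b`), their images are
geodesics sharing the ideal endpoint `ξ' ∈ ℝ`, and `H` is a horocycle based at `ξ`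
(the line `Im = h`) meeting `g1` at `p1 = a + ih` and `g2` at `p2 = b + ih`, then
`f p1` and `f p2` lie on a common horocycle based at `ξ'` (equal Busemann values). -/
theorem stmt13 (L : ℝ) (hL : 1 ≤ L) (Y Y' : Set ℂ)
    (hY : Y ⊆ {z : ℂ | 0 < z.im}) (hY' : Y' ⊆ {z : ℂ | 0 < z.im})
    (a b : ℝ) (hab : a ≠ b)
    (hg1 : {z : ℂ | z.re = a ∧ 0 < z.im} ⊆ Y)
    (hg2 : {z : ℂ | z.re = b ∧ 0 < z.im} ⊆ Y)
    (hspike : {z : ℂ | z.re ∈ Set.Icc (min a b) (max a b) ∧ 0 < z.im} ⊆ Y)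
    (f : ℂ → ℂ) (hmap : Set.MapsTo f Y Y')
    (hLip : ∀ z ∈ Y, ∀ w ∈ Y, hdist (f z) (f w) ≤ L * hdist z w)
    (haff1 : ∀ z ∈ {z : ℂ | z.re = a ∧ 0 < z.im}, ∀ w ∈ {z : ℂ | z.re = a ∧ 0 < z.im},
      hdist (f z) (f w) = L * hdist z w)
    (haff2 : ∀ z ∈ {z : ℂ | z.re = b ∧ 0 < z.im}, ∀ w ∈ {z : ℂ | z.re = b ∧ 0 < z.im},
      hdist (f z) (f w) = L * hdist z w)
    (ξ' η₁ η₂ : ℝ) (hη₁ : η₁ ≠ ξ') (hη₂ : η₂ ≠ ξ')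
    (him1 : ∀ z ∈ {z : ℂ | z.re = a ∧ 0 < z.im},
      ‖f z - (((ξ' + η₁) / 2 : ℝ) : ℂ)‖ = |ξ' - η₁| / 2)
    (him2 : ∀ z ∈ {z : ℂ | z.re = b ∧ 0 < z.im},
      ‖f z - (((ξ' + η₂) / 2 : ℝ) : ℂ)‖ = |ξ' - η₂| / 2)
    (h : ℝ) (hh : 0 < h) :
    busemann ξ' (f ((a : ℂ) + (h : ℝ) * Complex.I)) =
      busemann ξ' (f ((b : ℂ) + (h : ℝ) * Complex.I)) := by
  have hL0 : (0:ℝ) < L := lt_of_lt_of_le one_pos hL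
  set P : ℝ → ℂ := fun t => (a:ℂ) + (t:ℝ)*Complex.I with hP
  set Q : ℝ → ℂ := fun t => (b:ℂ) + (t:ℝ)*Complex.I with hQ
  have hPmem : ∀ t : ℝ, 0 < t → P t ∈ {z : ℂ | z.re = a ∧ 0 < z.im} := by
    intro t ht; constructor <;> simp [hP, ht]
  have hQmem : ∀ t : ℝ, 0 < t → Q t ∈ {z : ℂ | z.re = b ∧ 0 < z.im} := by
    intro t ht; constructor <;> simp [hQ, ht]
  have hPim : ∀ t : ℝ, 0 < t → 0 < (f (P t)).im := fun t ht =>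
    hY' (hmap (hg1 (hPmem t ht)))
  have hQim : ∀ t : ℝ, 0 < t → 0 < (f (Q t)).im := fun t ht =>
    hY' (hmap (hg2 (hQmem t ht)))
  set D : ℝ := busemann ξ' (f (P h)) - busemann ξ' (f (Q h)) with hD
  set δ : ℝ → ℝ := fun t => 6*L*Real.arsinh (|a-b|/(2*t)) with hδ
  have key : ∀ t : ℝ, h ≤ t →
      |D| ≤ δ t ∨ (2*L)*Real.log (t/h) ≤ |D| + δ t := by
    intro t hht
    have ht : 0 < t := lt_of_lt_of_le hh hht
    -- closeness of the two Busemann values at the images of P t, Q t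
    have step1 : |busemann ξ' (f (P t)) - busemann ξ' (f (Q t))| ≤ δ t := by
      have c1 := busemann_lip ξ' (f (P t)) (f (Q t)) (hPim t ht) (hQim t ht)
      have c2 : hdist (f (P t)) (f (Q t)) ≤ L * hdist (P t) (Q t) :=
        hLip _ (hg1 (hPmem t ht)) _ (hg2 (hQmem t ht))
      have c3 : hdist (P t) (Q t) = 2*Real.arsinh (|a-b|/(2*t)) :=
        hdist_horizontal a b t ht
      rw [c3] at c2
      calc |busemann ξ' (f (P t)) - busemann ξ' (f (Q t))|
          ≤ 3 * hdist (f (P t)) (f (Q t)) := c1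
        _ ≤ 3 * (L * (2*Real.arsinh (|a-b|/(2*t)))) := by
            have h0 : (0:ℝ) ≤ 3 := by norm_num
            exact mul_le_mul_of_nonneg_left c2 h0
        _ = δ t := by rw [hδ]; ring
    -- travel along the image geodesics
    set M : ℝ := L * Real.log (t/h) with hM
    have hM0 : 0 ≤ M := by
      have : 0 ≤ Real.log (t/h) := Real.log_nonneg ((one_le_div hh).mpr hht)
      positivity
    have step2 : |busemann ξ' (f (P t)) - busemann ξ' (f (P h))| = M := by
      have e1 : hdist (f (P t)) (f (P h)) =
          |busemann ξ' (f (P t)) - busemann ξ' (f (P h))| :=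
        circle_hdist ξ' η₁ _ _ (hPim t ht) (hPim h hh)
          (him1 _ (hPmem t ht)) (him1 _ (hPmem h hh))
      have e2 : hdist (f (P t)) (f (P h)) = L * hdist (P t) (P h) :=
        haff1 _ (hPmem t ht) _ (hPmem h hh)
      have e3 : hdist (P t) (P h) = Real.log (t/h) := hdist_vertical a t h hh hht
      rw [← e1, e2, e3]
    have step3 : |busemann ξ' (f (Q t)) - busemann ξ' (f (Q h))| = M := by
      have e1 : hdist (f (Q t)) (f (Q h)) =
          |busemann ξ' (f (Q t)) - busemann ξ' (f (Q h))| :=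
        circle_hdist ξ' η₂ _ _ (hQim t ht) (hQim h hh)
          (him2 _ (hQmem t ht)) (him2 _ (hQmem h hh))
      have e2 : hdist (f (Q t)) (f (Q h)) = L * hdist (Q t) (Q h) :=
        haff2 _ (hQmem t ht) _ (hQmem h hh)
      have e3 : hdist (Q t) (Q h) = Real.log (t/h) := hdist_vertical b t h hh hht
      rw [← e1, e2, e3]
    -- case analysis on directions
    have hu := (abs_eq hM0).mp step2
    have hv := (abs_eq hM0).mp step3
    have habs1 := abs_le.mp step1
    have hDD1 : D ≤ |D| := le_abs_self D
    have hDD2 : -D ≤ |D| := neg_le_abs D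
    have h2LM : (2*L)*Real.log (t/h) = 2*M := by rw [hM]; ring
    rw [h2LM]
    rcases hu with hu | hu <;> rcases hv with hv | hv
    · left
      have : D = busemann ξ' (f (P t)) - busemann ξ' (f (Q t)) := by
        rw [hD]; linarith
      rw [this]; exact step1
    · right; linarith
    · right; linarith
    · left
      have : D = busemann ξ' (f (P t)) - busemann ξ' (f (Q t)) := by
        rw [hD]; linarith
      rw [this]; exact step1
  -- limits
  have htend1 : Filter.Tendsto δ Filter.atTop (nhds 0) := by
    have h1 : Filter.Tendsto (fun t : ℝ => |a-b|/(2*t)) Filter.atTop (nhds 0) := by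
      have := Filter.Tendsto.const_mul (|a-b|/2) tendsto_inv_atTop_zero (α := ℝ)
      simp only [mul_zero] at this
      convert this using 2 with t
      ring
    have h2 : Filter.Tendsto (fun t : ℝ => Real.arsinh (|a-b|/(2*t)))
        Filter.atTop (nhds 0) := by
      have := (Real.continuous_arsinh.tendsto 0).comp h1
      simpa [Real.arsinh_zero, Function.comp_def] using this
    have := h2.const_mul (6*L)
    simpa [hδ, mul_assoc] using this
  have htend2 : Filter.Tendsto (fun t : ℝ => (2*L)*Real.log (t/h))
      Filter.atTop Filter.atTop := by
    have h1 : Filter.Tendsto (fun t : ℝ => t/h) Filter.atTop Filter.atTop :=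
      Filter.tendsto_id.atTop_div_const hh
    have h2 := Real.tendsto_log_atTop.comp h1
    exact h2.const_mul_atTop (by positivity)
  -- conclusion
  have hcon : ∀ ε : ℝ, 0 < ε → |D| < ε := by
    intro ε hε
    obtain ⟨t, ht1, ht2, ht3⟩ :=
      ((htend1.eventually_lt_const hε).and
        ((htend2.eventually_gt_atTop (|D| + ε)).and
          (Filter.eventually_ge_atTop h))).exists
    rcases key t ht3 with hc | hc
    · linarith
    · linarith
  have hD0 : D = 0 := by
    by_contra hne
    exact absurd (hcon |D| (abs_pos.mpr hne)) (lt_irrefl _)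
  have := sub_eq_zero.mp hD0
  simpa [hP, hQ] using this
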